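/- If G is a connected graph of order n ≥ 4 with γ_R(G) = 3, then b_R(G) ≤ Δ(G) = n − 2. -/

import Mathlib

/-!
Since `γ_R(G) = 3 > 2`, no vertex is adjacent to all others, while a Roman dominating function
of weight 3 puts 2 on a vertex dominating all but at most one other vertex; hence `Δ(G) = n - 2`.
The same count shows that a graph on `n ≥ 4` vertices with maximum degree at most `n - 3` has
Roman domination number at least 4, so it suffices to delete at most `n - 2` edges meeting every
vertex of degree `n - 2`. If `v` has degree `n - 2` and `u` is its unique non-neighbour, take all
edges at `v` but one, `va` with `a` a neighbour of `u`, together with `ua`; if `u` is isolated,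
take all edges at `v`.
-/

open SimpleGraph Finset

/-- A Roman dominating function: values in {0,1,2}, every 0-vertex has a neighbor with value 2. -/
def IsRDF {V : Type*} (G : SimpleGraph V) (f : V → ℕ) : Prop :=
  (∀ v, f v ≤ 2) ∧ ∀ v, f v = 0 → ∃ u, G.Adj v u ∧ f u = 2

/-- The Roman domination number: minimum weight of a Roman dominating function. -/
noncomputable def romanDom {V : Type*} [Fintype V] (G : SimpleGraph V) : ℕ :=
  sInf {k | ∃ f : V → ℕ, IsRDF G f ∧ ∑ v, f v = k}

/-- A dominating set. -/
def IsDomSet {V : Type*} (G : SimpleGraph V) (S : Set V) : Prop :=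
  ∀ v, v ∈ S ∨ ∃ u ∈ S, G.Adj u v

/-- The domination number. -/
noncomputable def domNum {V : Type*} [Fintype V] (G : SimpleGraph V) : ℕ :=
  sInf {k | ∃ S : Set V, IsDomSet G S ∧ S.ncard = k}

/-- Degree of a vertex. -/
noncomputable def deg {V : Type*} (G : SimpleGraph V) (v : V) : ℕ :=
  (G.neighborSet v).ncard

/-- Maximum degree. -/
noncomputable def maxDeg {V : Type*} (G : SimpleGraph V) : ℕ :=
  sSup {d | ∃ v, deg G v = d}

/-- Minimum degree. -/
noncomputable def minDeg {V : Type*} (G : SimpleGraph V) : ℕ :=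
  sInf {d | ∃ v, deg G v = d}

/-- The Roman bondage number: minimum size of an edge set whose deletion increases `romanDom`. -/
noncomputable def romanBondage {V : Type*} [Fintype V] (G : SimpleGraph V) : ℕ :=
  sInf {k | ∃ B : Set (Sym2 V), B ⊆ G.edgeSet ∧
    romanDom (G.deleteEdges B) > romanDom G ∧ B.ncard = k}

/-- The bondage number: minimum size of an edge set whose deletion increases `domNum`. -/
noncomputable def bondage {V : Type*} [Fintype V] (G : SimpleGraph V) : ℕ :=
  sInf {k | ∃ B : Set (Sym2 V), B ⊆ G.edgeSet ∧
    domNum (G.deleteEdges B) > domNum G ∧ B.ncard = k}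

/-- A vertex cover. -/
def IsVC {V : Type*} (G : SimpleGraph V) (S : Set V) : Prop :=
  ∀ u v, G.Adj u v → u ∈ S ∨ v ∈ S

/-- The vertex covering number. -/
noncomputable def vcNum {V : Type*} [Fintype V] (G : SimpleGraph V) : ℕ :=
  sInf {k | ∃ S : Set V, IsVC G S ∧ S.ncard = k}

section

variable {V : Type*} {G : SimpleGraph V} {u v w : V}

lemma maxDeg_eq_of_forall_deg_le {d : ℕ} (h : ∀ w, deg G w ≤ d) (hv : deg G v = d) :
    maxDeg G = d :=
  IsGreatest.csSup_eq ⟨⟨v, hv⟩, by rintro _ ⟨w, rfl⟩; exact h w⟩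

variable [Fintype V]

lemma deg_le_card_sub (s : Finset V) (hs : ∀ w ∈ s, ¬G.Adj v w) :
    deg G v ≤ Fintype.card V - s.card := by
  have hsub : G.neighborSet v ⊆ (↑s)ᶜ := fun w hw hws => hs w hws hw
  calc deg G v ≤ ((↑s)ᶜ : Set V).ncard := Set.ncard_le_ncard hsub
    _ = Fintype.card V - s.card := by
      rw [Set.ncard_compl, Set.ncard_coe_finset, Nat.card_eq_fintype_card]

lemma adj_of_card_sub_two_lt_deg (hv : Fintype.card V - 2 < deg G v) (hwv : w ≠ v) :
    G.Adj v w := by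
  classical
  by_contra hvw
  have : deg G v ≤ _ := deg_le_card_sub {v, w} (by simp [hvw])
  rw [Finset.card_pair hwv.symm] at this
  omega

lemma adj_of_deg_eq_card_sub_two (hv : deg G v = Fintype.card V - 2) (huv : u ≠ v)
    (hvu : ¬G.Adj v u) (hwv : w ≠ v) (hwu : w ≠ u) : G.Adj v w := by
  classical
  by_contra hvw
  have hcard : ({v, u, w} : Finset V).card = 3 := by
    rw [Finset.card_insert_of_notMem (by simp [huv.symm, hwv.symm]), Finset.card_pair hwu.symm]
  have : deg G v ≤ _ := deg_le_card_sub {v, u, w} (by simp [hvu, hvw])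
  have := hcard ▸ Finset.card_le_univ ({v, u, w} : Finset V)
  omega

lemma exists_not_adj_of_deg_eq_card_sub_two (hv : deg G v = Fintype.card V - 2)
    (hn : 2 ≤ Fintype.card V) : ∃ u, u ≠ v ∧ ¬G.Adj v u := by
  have hlt : (G.neighborSet v).ncard < ({v}ᶜ : Set V).ncard := by
    rw [Set.ncard_compl, Set.ncard_singleton, Nat.card_eq_fintype_card]
    exact hv.trans_lt (by omega)
  exact Set.exists_mem_notMem_of_ncard_lt_ncard hlt

lemma romanDom_le_sum {f : V → ℕ} (hf : IsRDF G f) : romanDom G ≤ ∑ v, f v :=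
  Nat.sInf_le ⟨f, hf, rfl⟩

lemma exists_isRDF_sum_eq_romanDom (G : SimpleGraph V) :
    ∃ f, IsRDF G f ∧ ∑ v, f v = romanDom G :=
  Nat.sInf_mem (s := {k | ∃ f : V → ℕ, IsRDF G f ∧ ∑ v, f v = k})
    ⟨_, fun _ => 1, ⟨fun _ => one_le_two, fun _ h => absurd h one_ne_zero⟩, rfl⟩

lemma romanDom_le_two_of_forall_adj (h : ∀ w, w ≠ v → G.Adj v w) : romanDom G ≤ 2 := by
  classical
  refine (romanDom_le_sum (f := fun w => if w = v then 2 else 0) ⟨?_, ?_⟩).trans_eq ?_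
  · intro w
    dsimp only
    split_ifs <;> omega
  · intro w hw
    exact ⟨v, (h w (by rintro rfl; simp at hw)).symm, by simp⟩
  · simp

lemma deg_le_card_sub_two_of_two_lt_romanDom (h : 2 < romanDom G) (v : V) :
    deg G v ≤ Fintype.card V - 2 := by
  by_contra! hv
  exact h.not_ge (romanDom_le_two_of_forall_adj fun w => adj_of_card_sub_two_lt_deg hv)

lemma IsRDF.exists_eq_two {f : V → ℕ} (hf : IsRDF G f) (hw : ∑ v, f v < Fintype.card V) :
    ∃ v, f v = 2 := by
  by_contra! h
  have hpos : ∀ w ∈ univ, 1 ≤ f w := fun w _ => Nat.one_le_iff_ne_zero.2 fun h0 =>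
    let ⟨u, _, hu⟩ := hf.2 w h0; h u hu
  have : Fintype.card V ≤ ∑ w, f w := by simpa using Finset.card_nsmul_le_sum univ f 1 hpos
  omega

lemma IsRDF.exists_card_sub_two_le_deg {f : V → ℕ} (hf : IsRDF G f) (hn : 4 ≤ Fintype.card V)
    (hw : ∑ v, f v ≤ 3) : ∃ v, Fintype.card V - 2 ≤ deg G v := by
  classical
  obtain ⟨v, hv⟩ := hf.exists_eq_two (by omega)
  have hzero : ∀ w, f w = 0 → G.Adj v w := by
    intro w hw
    obtain ⟨x, hwx, hx⟩ := hf.2 w hw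
    obtain rfl : x = v := by
      by_contra hxv
      have := (Finset.sum_pair hxv).symm.trans_le
        (Finset.sum_le_sum_of_subset (f := f) (subset_univ {x, v}))
      omega
    exact hwx.symm
  set P := univ.filter (f · ≠ 0)
  have hP : P.card ≤ 2 := by
    have hvP : v ∈ P := by simp [P, hv]
    have hrest : (P.erase v).card ≤ ∑ w ∈ P.erase v, f w := by
      simpa using Finset.card_nsmul_le_sum (P.erase v) f 1
        fun w hw => Nat.one_le_iff_ne_zero.2 (mem_filter.1 (mem_of_mem_erase hw)).2
    have hsum : f v + ∑ w ∈ P.erase v, f w = ∑ w, f w := by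
      rw [Finset.add_sum_erase P f hvP, Finset.sum_filter_ne_zero]
    rw [card_erase_of_mem hvP] at hrest
    omega
  have hZ : (univ.filter (f · = 0)).card + P.card = Fintype.card V :=
    (card_filter_add_card_filter_not _).trans card_univ
  refine ⟨v, ?_⟩
  calc Fintype.card V - 2 ≤ (univ.filter (f · = 0)).card := by
        omega
    _ ≤ deg G v := by
        rw [← Set.ncard_coe_finset]
        exact Set.ncard_le_ncard fun w hw => hzero w (by simpa using hw)

lemma exists_card_sub_two_le_deg_of_romanDom_le_three (hn : 4 ≤ Fintype.card V)
    (h : romanDom G ≤ 3) : ∃ v, Fintype.card V - 2 ≤ deg G v := by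
  obtain ⟨f, hf, hsum⟩ := exists_isRDF_sum_eq_romanDom G
  exact hf.exists_card_sub_two_le_deg hn (hsum ▸ h)

lemma romanBondage_le_ncard {B : Set (Sym2 V)} (hB : B ⊆ G.edgeSet)
    (h : romanDom G < romanDom (G.deleteEdges B)) : romanBondage G ≤ B.ncard :=
  Nat.sInf_le ⟨B, hB, h, rfl⟩

lemma deg_deleteEdges_le (B : Set (Sym2 V)) (w : V) : deg (G.deleteEdges B) w ≤ deg G w :=
  Set.ncard_le_ncard fun _ hx => (deleteEdges_adj.1 hx).1

lemma deg_deleteEdges_lt {B : Set (Sym2 V)} {x : V} (hx : G.Adj w x) (hB : s(w, x) ∈ B) :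
    deg (G.deleteEdges B) w < deg G w :=
  Set.ncard_lt_ncard <| (Set.ssubset_iff_of_subset fun _ hy => (deleteEdges_adj.1 hy).1).2
    ⟨x, hx, fun h => (deleteEdges_adj.1 h).2 hB⟩

lemma exists_edges_meeting_deg_eq_of_adj (hn : 4 ≤ Fintype.card V)
    (hv : deg G v = Fintype.card V - 2) (hadj : ∀ w, w ≠ v → w ≠ u → G.Adj v w) {a : V}
    (hua : G.Adj u a) (hva : G.Adj v a) :
    ∃ B ⊆ G.edgeSet, B.ncard ≤ Fintype.card V - 2 ∧
      ∀ w, deg G w = Fintype.card V - 2 → ∃ x, G.Adj w x ∧ s(w, x) ∈ B := by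
  obtain ⟨b, hb, hba⟩ := Set.exists_ne_of_one_lt_ncard (s := G.neighborSet v)
    (show 1 < deg G v by omega) a
  refine ⟨insert s(u, a) ((fun w => s(v, w)) '' (G.neighborSet v \ {a})), ?_, ?_, ?_⟩
  · rintro _ (rfl | ⟨w, hw, rfl⟩)
    exacts [hua, hw.1]
  · calc _ ≤ ((fun w => s(v, w)) '' (G.neighborSet v \ {a})).ncard + 1 :=
          Set.ncard_insert_le _ _
      _ ≤ (G.neighborSet v \ {a}).ncard + 1 := by grw [Set.ncard_image_le (Set.toFinite _)]
      _ = Fintype.card V - 2 := by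
          rw [Set.ncard_sdiff_singleton_of_mem (s := G.neighborSet v) hva]
          unfold deg at hv
          omega
  · intro w _
    by_cases hwv : w = v
    · subst hwv
      exact ⟨b, hb, Or.inr ⟨b, ⟨hb, hba⟩, rfl⟩⟩
    by_cases hwu : w = u
    · subst hwu
      exact ⟨a, hua, Or.inl rfl⟩
    by_cases hwa : w = a
    · subst hwa
      exact ⟨u, hua.symm, Or.inl Sym2.eq_swap⟩
    exact ⟨v, (hadj w hwv hwu).symm, Or.inr ⟨w, ⟨hadj w hwv hwu, hwa⟩, Sym2.eq_swap⟩⟩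

lemma exists_edges_meeting_deg_eq_of_isolated (hn : 4 ≤ Fintype.card V)
    (hv : deg G v = Fintype.card V - 2) (hadj : ∀ w, w ≠ v → w ≠ u → G.Adj v w)
    (hu : ∀ a, ¬G.Adj u a) :
    ∃ B ⊆ G.edgeSet, B.ncard ≤ Fintype.card V - 2 ∧
      ∀ w, deg G w = Fintype.card V - 2 → ∃ x, G.Adj w x ∧ s(w, x) ∈ B := by
  refine ⟨(fun w => s(v, w)) '' G.neighborSet v, ?_,
    (Set.ncard_image_le (Set.toFinite _)).trans hv.le, ?_⟩
  · rintro _ ⟨w, hw, rfl⟩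
    exact hw
  · intro w hw
    by_cases hwv : w = v
    · subst hwv
      obtain ⟨b, hb⟩ := Set.nonempty_of_ncard_ne_zero (s := G.neighborSet w)
        (show deg G w ≠ 0 by omega)
      exact ⟨b, hb, b, hb, rfl⟩
    have hwu : w ≠ u := by
      rintro rfl
      have : deg G w = 0 :=
        (Set.ncard_eq_zero (Set.toFinite _)).2 (Set.eq_empty_iff_forall_notMem.2 hu)
      omega
    exact ⟨v, (hadj w hwv hwu).symm, w, hadj w hwv hwu, Sym2.eq_swap⟩

lemma exists_edges_meeting_deg_eq (hn : 4 ≤ Fintype.card V)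
    (hv : deg G v = Fintype.card V - 2) :
    ∃ B ⊆ G.edgeSet, B.ncard ≤ Fintype.card V - 2 ∧
      ∀ w, deg G w = Fintype.card V - 2 → ∃ x, G.Adj w x ∧ s(w, x) ∈ B := by
  obtain ⟨u, huv, hvu⟩ := exists_not_adj_of_deg_eq_card_sub_two hv (by omega)
  have hadj : ∀ w, w ≠ v → w ≠ u → G.Adj v w := fun _ =>
    adj_of_deg_eq_card_sub_two hv huv hvu
  by_cases hu : ∃ a, G.Adj u a
  · obtain ⟨a, hua⟩ := hu
    have hav : a ≠ v := by rintro rfl; exact hvu hua.symm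
    exact exists_edges_meeting_deg_eq_of_adj hn hv hadj hua (hadj a hav hua.ne.symm)
  · exact exists_edges_meeting_deg_eq_of_isolated hn hv hadj (not_exists.1 hu)

lemma deg_deleteEdges_lt_of_forall {B : Set (Sym2 V)} {d : ℕ} (hdeg : ∀ w, deg G w ≤ d)
    (hB : ∀ w, deg G w = d → ∃ x, G.Adj w x ∧ s(w, x) ∈ B) (w : V) :
    deg (G.deleteEdges B) w < d := by
  by_cases hw : deg G w = d
  · obtain ⟨x, hwx, hxB⟩ := hB w hw
    exact hw ▸ deg_deleteEdges_lt hwx hxB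
  · exact (deg_deleteEdges_le B w).trans_lt ((hdeg w).lt_of_ne hw)

end

theorem stmt18_general {V : Type*} [Fintype V] (G : SimpleGraph V)
    (hn : 4 ≤ Fintype.card V)
    (hγ : romanDom G = 3) :
    romanBondage G ≤ maxDeg G ∧ maxDeg G = Fintype.card V - 2 := by
  have hdeg : ∀ w, deg G w ≤ Fintype.card V - 2 :=
    deg_le_card_sub_two_of_two_lt_romanDom (by omega)
  obtain ⟨v, hv⟩ := exists_card_sub_two_le_deg_of_romanDom_le_three hn hγ.le
  replace hv := (hdeg v).antisymm hv
  have hmax := maxDeg_eq_of_forall_deg_le hdeg hv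
  obtain ⟨B, hBG, hBcard, hBmeets⟩ := exists_edges_meeting_deg_eq hn hv
  have hγ' : 3 < romanDom (G.deleteEdges B) := by
    by_contra! h
    obtain ⟨w, hw⟩ := exists_card_sub_two_le_deg_of_romanDom_le_three hn h
    exact (deg_deleteEdges_lt_of_forall hdeg hBmeets w).not_ge hw
  exact ⟨(romanBondage_le_ncard hBG (hγ ▸ hγ')).trans (hmax ▸ hBcard), hmax⟩

theorem stmt18 {V : Type*} [Fintype V] (G : SimpleGraph V)
    (hconn : G.Connected) (hn : 4 ≤ Fintype.card V)
    (hγ : romanDom G = 3) :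
    romanBondage G ≤ maxDeg G ∧ maxDeg G = Fintype.card V - 2 :=
  stmt18_general G hn hγ
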